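/- arXiv:math/0507576 — 2 statements merged into one kernel-verified Lean document; each statement's English description precedes it below -/
import Mathlib

section
/- The function w(y) = (log log(1/|y|))^n defined on the punctured unit ball {y ∈ ℝⁿ : 0 < |y| < 1/e^e} satisfies the Muckenhoupt A_n condition on balls centered at the origin: there exists C < ∞ such that for all 0 < r₀ < 1/e^e, (r₀^{-n} ∫₀^{r₀} (log log(1/r))^n r^{n-1} dr) · (r₀^{-n} ∫₀^{r₀} (log log(1/r))^{n/(1-n)} r^{n-1} dr)^{n-1} ≤ C. -/
open MeasureTheory Real Set

/-!
Write `L = log log (1/r₀)` and `u = log (r₀/r)` for `0 < r < r₀`. Since `log log (1/r)` is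
decreasing and `log (1/r) = log (1/r₀) + u`, we have `L ≤ log log (1/r) ≤ L + u ≤ L (1 + u)`.
The bound `(1 + log x)^n ≤ n^n x` turns the second estimate into
`(log log (1/r))^n r^(n-1) ≤ n^n L^n r₀ r^(n-2) ≤ n^n L^n r₀^(n-1)`, while the first one gives
`(log log (1/r))^(n/(1-n)) r^(n-1) ≤ L^(n/(1-n)) r₀^(n-1)`. So the two averages are at most
`n^n L^n` and `L^(n/(1-n))`, and the powers of `L` cancel in the product, which is at most `n^n`.
-/

lemma one_add_log_pow_le {x : ℝ} (hx : 1 ≤ x) (n : ℕ) : (1 + log x) ^ n ≤ n ^ n * x := by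
  rcases n.eq_zero_or_pos with rfl | hn
  · simpa using hx
  have hnR : (1 : ℝ) ≤ n := by exact_mod_cast hn
  have hlog : 0 ≤ log x := log_nonneg hx
  set z := (1 + log x) / n with hz_def
  -- `1 + t ≤ exp t` at `t = z - 1`
  have hz : z ≤ exp (log x / n) := by
    have hshift : z - 1 ≤ log x / n := by
      have h1n : 1 / (n : ℝ) ≤ 1 := (div_le_one (by positivity)).2 hnR
      have : z - 1 = log x / n + (1 / n - 1) := by rw [hz_def]; ring
      linarith
    linarith [add_one_le_exp (z - 1), exp_le_exp.2 hshift]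
  calc (1 + log x) ^ n = n ^ n * z ^ n := by
        rw [← mul_pow, hz_def, mul_div_cancel₀ _ (by positivity)]
    _ ≤ n ^ n * exp (log x / n) ^ n := by gcongr
    _ = n ^ n * x := by
        rw [← exp_nat_mul, mul_div_cancel₀ _ (by positivity), exp_log (by linarith)]

lemma log_add_le_log_add {a u : ℝ} (ha : 1 ≤ a) (hu : 0 ≤ u) : log (a + u) ≤ log a + u := by
  have ha0 : 0 < a := by linarith
  have h := log_le_sub_one_of_pos (x := (a + u) / a) (by positivity)
  rw [log_div (by positivity) ha0.ne', add_div, div_self ha0.ne'] at h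
  linarith [div_le_self hu ha]

lemma le_log_one_div {a r : ℝ} (hr : 0 < r) (h : r ≤ exp (-a)) : a ≤ log (1 / r) := by
  rw [one_div, log_inv]
  linarith [log_le_log hr h, log_exp (-a)]

lemma one_le_log_log_one_div {r : ℝ} (hr : 0 < r) (h : r ≤ exp (-exp 1)) :
    1 ≤ log (log (1 / r)) := by
  simpa using log_le_log (exp_pos 1) (le_log_one_div hr h)

lemma log_log_one_div_antitoneOn : AntitoneOn (fun r ↦ log (log (1 / r))) (Ioo 0 1) := by
  intro a ha b hb hab
  have hb1 : 1 < 1 / b := by rw [lt_div_iff₀ hb.1]; linarith [hb.2]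
  exact log_le_log (log_pos hb1) (log_le_log (by linarith) (one_div_le_one_div_of_le ha.1 hab))

lemma log_log_one_div_le_add {r r₀ : ℝ} (hr : 0 < r) (hrr₀ : r ≤ r₀) (hr₀ : r₀ ≤ exp (-1)) :
    log (log (1 / r)) ≤ log (log (1 / r₀)) + log (r₀ / r) := by
  have hr₀0 : 0 < r₀ := hr.trans_le hrr₀
  have hsplit : log (1 / r) = log (1 / r₀) + log (r₀ / r) := by
    rw [← log_mul (by positivity) (by positivity)]
    congr 1
    field_simp
  rw [hsplit]
  exact log_add_le_log_add (le_log_one_div hr₀0 hr₀)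
    (log_nonneg (by rw [le_div_iff₀ hr]; linarith))

lemma log_log_one_div_pow_mul_pow_le {n : ℕ} (hn : 2 ≤ n) {r r₀ : ℝ} (hr : 0 < r)
    (hrr₀ : r ≤ r₀) (hr₀ : r₀ ≤ exp (-exp 1)) :
    log (log (1 / r)) ^ n * r ^ (n - 1) ≤ n ^ n * log (log (1 / r₀)) ^ n * r₀ ^ (n - 1) := by
  obtain ⟨m, rfl⟩ : ∃ m, n = m + 2 := ⟨n - 2, by omega⟩
  set L := log (log (1 / r₀))
  set u := log (r₀ / r)
  have hr₀0 : 0 < r₀ := hr.trans_le hrr₀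
  have hr₀1 : r₀ < 1 := hr₀.trans_lt (exp_lt_one_iff.2 (neg_neg_of_pos (exp_pos 1)))
  have hL : 1 ≤ L := one_le_log_log_one_div hr₀0 hr₀
  have hφL : L ≤ log (log (1 / r)) :=
    log_log_one_div_antitoneOn ⟨hr, hrr₀.trans_lt hr₀1⟩ ⟨hr₀0, hr₀1⟩ hrr₀
  have hx : 1 ≤ r₀ / r := by rw [le_div_iff₀ hr]; linarith
  have hu : 0 ≤ u := log_nonneg hx
  have hφ : log (log (1 / r)) ≤ L * (1 + u) := by
    have hr₀' : r₀ ≤ exp (-1) := hr₀.trans (exp_le_exp.2 (by linarith [add_one_le_exp 1]))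
    nlinarith [log_log_one_div_le_add hr hrr₀ hr₀']
  rw [show m + 2 - 1 = m + 1 from rfl]
  calc log (log (1 / r)) ^ (m + 2) * r ^ (m + 1)
      ≤ (L * (1 + u)) ^ (m + 2) * r ^ (m + 1) := by gcongr; linarith
    _ ≤ L ^ (m + 2) * ((↑(m + 2) : ℝ) ^ (m + 2) * (r₀ / r)) * r ^ (m + 1) := by
        rw [mul_pow]; gcongr; exact one_add_log_pow_le hx _
    _ = (↑(m + 2) : ℝ) ^ (m + 2) * L ^ (m + 2) * (r₀ * r ^ m) := by
        field_simp; ring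
    _ ≤ (↑(m + 2) : ℝ) ^ (m + 2) * L ^ (m + 2) * r₀ ^ (m + 1) := by
        rw [pow_succ' r₀]; gcongr

lemma log_log_one_div_rpow_mul_pow_le {c : ℝ} (hc : c ≤ 0) (k : ℕ) {r r₀ : ℝ} (hr : 0 < r)
    (hrr₀ : r ≤ r₀) (hr₀ : r₀ ≤ exp (-exp 1)) :
    log (log (1 / r)) ^ c * r ^ k ≤ log (log (1 / r₀)) ^ c * r₀ ^ k := by
  have hr₀1 : r₀ < 1 := hr₀.trans_lt (exp_lt_one_iff.2 (neg_neg_of_pos (exp_pos 1)))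
  have hL : 0 < log (log (1 / r₀)) := by
    linarith [one_le_log_log_one_div (hr.trans_le hrr₀) hr₀]
  have hφL := log_log_one_div_antitoneOn ⟨hr, hrr₀.trans_lt hr₀1⟩ ⟨hr.trans_le hrr₀, hr₀1⟩ hrr₀
  exact mul_le_mul (rpow_le_rpow_of_nonpos hL hφL hc) (pow_le_pow_left₀ hr.le hrr₀ k)
    (pow_nonneg hr.le k) (rpow_nonneg hL.le c)

lemma rpow_neg_mul_setIntegral_Ioo_le {n : ℕ} (hn : 1 ≤ n) {f : ℝ → ℝ} {K r₀ : ℝ}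
    (hr₀ : 0 < r₀) (hf0 : ∀ r ∈ Ioo 0 r₀, 0 ≤ f r) (hfK : ∀ r ∈ Ioo 0 r₀, f r ≤ K * r₀ ^ (n - 1)) :
    r₀ ^ (-(n : ℝ)) * ∫ r in Ioo 0 r₀, f r ≤ K := by
  have hint : ∫ r in Ioo 0 r₀, f r ≤ K * r₀ ^ (n - 1) * r₀ := by
    have := norm_setIntegral_le_of_norm_le_const (μ := volume) measure_Ioo_lt_top
      fun r hr ↦ by rw [Real.norm_eq_abs, abs_of_nonneg (hf0 r hr)]; exact hfK r hr
    rw [volume_real_Ioo_of_le hr₀.le, sub_zero] at this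
    exact (le_abs_self _).trans this
  calc r₀ ^ (-(n : ℝ)) * ∫ r in Ioo 0 r₀, f r ≤ r₀ ^ (-(n : ℝ)) * (K * r₀ ^ (n - 1) * r₀) := by
        gcongr
    _ = K := by
        rw [mul_assoc K, ← pow_succ, Nat.sub_add_cancel hn, rpow_neg hr₀.le, rpow_natCast]
        field_simp

lemma pow_mul_rpow_div_one_sub_pow {L : ℝ} (hL : 0 < L) {n : ℕ} (hn : 1 < n) :
    L ^ n * (L ^ ((n : ℝ) / (1 - n))) ^ (n - 1) = 1 := by
  have hn' : (1 : ℝ) - n ≠ 0 := by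
    have : (1 : ℝ) < n := by exact_mod_cast hn
    linarith
  rw [← rpow_natCast (L ^ _), ← rpow_mul hL.le, ← rpow_natCast L n, ← rpow_add hL,
    Nat.cast_sub hn.le, Nat.cast_one]
  convert rpow_zero L using 2
  field_simp
  ring

/-- The weight `w(y) = (log log (1/|y|))^n` satisfies the Muckenhoupt `A_n`
condition on balls centered at the origin: the product of the averages is
uniformly bounded for `0 < r₀ < e^{-e}`. -/
theorem stmt0 (n : ℕ) (hn : 2 ≤ n) :
    ∃ C : ℝ, ∀ r₀ : ℝ, 0 < r₀ → r₀ < Real.exp (-(Real.exp 1)) →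
      (r₀ ^ (-(n : ℝ)) *
          ∫ r in Set.Ioo (0:ℝ) r₀, (Real.log (Real.log (1/r))) ^ n * r ^ (n - 1)) *
      (r₀ ^ (-(n : ℝ)) *
          ∫ r in Set.Ioo (0:ℝ) r₀,
            (Real.log (Real.log (1/r))) ^ ((n : ℝ) / (1 - (n : ℝ))) * r ^ (n - 1)) ^ (n - 1)
        ≤ C := by
  refine ⟨n ^ n, fun r₀ hr₀ hr₀e ↦ ?_⟩
  set L := log (log (1 / r₀))
  set c : ℝ := (n : ℝ) / (1 - n)
  have hL : 1 ≤ L := one_le_log_log_one_div hr₀ hr₀e.le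
  have hnR : (2 : ℝ) ≤ n := by exact_mod_cast hn
  have hc : c ≤ 0 := div_nonpos_of_nonneg_of_nonpos (by positivity) (by linarith)
  have hφ : ∀ r ∈ Ioo 0 r₀, 0 ≤ log (log (1 / r)) := fun r hr ↦
    (one_le_log_log_one_div hr.1 (hr.2.trans hr₀e).le).trans' zero_le_one
  have hI₂ : ∀ r ∈ Ioo 0 r₀, 0 ≤ log (log (1 / r)) ^ c * r ^ (n - 1) := fun r hr ↦
    mul_nonneg (rpow_nonneg (hφ r hr) c) (pow_nonneg hr.1.le _)
  have hA₁ : r₀ ^ (-(n : ℝ)) * ∫ r in Ioo 0 r₀, log (log (1 / r)) ^ n * r ^ (n - 1)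
      ≤ n ^ n * L ^ n :=
    rpow_neg_mul_setIntegral_Ioo_le (by omega) hr₀
      (fun r hr ↦ mul_nonneg (pow_nonneg (hφ r hr) n) (pow_nonneg hr.1.le _))
      fun r hr ↦ log_log_one_div_pow_mul_pow_le hn hr.1 hr.2.le hr₀e.le
  have hA₂ : r₀ ^ (-(n : ℝ)) * ∫ r in Ioo 0 r₀, log (log (1 / r)) ^ c * r ^ (n - 1) ≤ L ^ c :=
    rpow_neg_mul_setIntegral_Ioo_le (by omega) hr₀ hI₂
      fun r hr ↦ log_log_one_div_rpow_mul_pow_le hc _ hr.1 hr.2.le hr₀e.le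
  have hA₂0 : 0 ≤ r₀ ^ (-(n : ℝ)) * ∫ r in Ioo 0 r₀, log (log (1 / r)) ^ c * r ^ (n - 1) :=
    mul_nonneg (rpow_nonneg hr₀.le _) (setIntegral_nonneg measurableSet_Ioo hI₂)
  calc _ ≤ n ^ n * L ^ n * (L ^ c) ^ (n - 1) := by gcongr
    _ = n ^ n := by
        rw [mul_assoc, pow_mul_rpow_div_one_sub_pow (by linarith) (by omega), mul_one]
end

section
/- For n ≥ 2, the family Δ of all rectifiable curves in B^n(0, e^{-e}) ⊂ ℝⁿ ending at the origin has weighted n-modulus zero with respect to the weight w(y) = (log log(1/|y|))^n: M_n^w(Δ) = 0. -/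
open MeasureTheory Real Set ENNReal Filter

/-- A curve is a pair `(L, γ)`; it belongs to the family of rectifiable curves
in `B^n(0,R)` ending at the origin if `γ` is parametrized by arclength on
`[0,L)`, stays in the punctured ball, and tends to `0` at `L`. -/
def CurvesToZero (n : ℕ) (R : ℝ) : Set (ℝ × (ℝ → EuclideanSpace ℝ (Fin n))) :=
  {c | 0 < c.1 ∧
    (∀ s ∈ Set.Ico (0:ℝ) c.1, ∀ t ∈ Set.Ico (0:ℝ) c.1, s ≤ t →
      eVariationOn c.2 (Set.Icc s t) = ENNReal.ofReal (t - s)) ∧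
    (∀ t ∈ Set.Ico (0:ℝ) c.1,
      c.2 t ∈ Metric.ball (0 : EuclideanSpace ℝ (Fin n)) R \ {0}) ∧
    Filter.Tendsto c.2 (nhdsWithin c.1 (Set.Iio c.1)) (nhds 0)}

/-- `ρ` is admissible for a family `Γ` of arclength-parametrized curves if the
line integral of `ρ` along every curve of `Γ` is at least `1`. -/
def Admissible (n : ℕ) (Γ : Set (ℝ × (ℝ → EuclideanSpace ℝ (Fin n))))
    (ρ : EuclideanSpace ℝ (Fin n) → ℝ≥0∞) : Prop :=
  ∀ c ∈ Γ, 1 ≤ ∫⁻ t in Set.Ico (0:ℝ) c.1, ρ (c.2 t)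

/-- The weighted `p`-modulus of a curve family with weight `w`. -/
noncomputable def ModulusW (n : ℕ) (p : ℝ) (w : EuclideanSpace ℝ (Fin n) → ℝ≥0∞)
    (Γ : Set (ℝ × (ℝ → EuclideanSpace ℝ (Fin n)))) : ℝ≥0∞ :=
  ⨅ ρ ∈ {ρ : EuclideanSpace ℝ (Fin n) → ℝ≥0∞ | Measurable ρ ∧ Admissible n Γ ρ},
    ∫⁻ x, ρ x ^ p * w x

/-!
Take `ρ = 1 / (r log (1/r) log log (1/r))` on `B(0, e^{-e})`. Its radial primitive
`-log log log (1/r)` blows up at `0`, the profile `r log (1/r) log log (1/r)` is increasing below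
`e^{-e}`, and an arclength curve ending at the origin is within distance `L - t` of it at time `t`;
hence `∫_γ ρ = ∞` for every `γ ∈ Δ`, so every multiple `δ ρ` is admissible. On the other hand
`ρ ^ n w = (r log (1/r))⁻ⁿ`, which is integrable near `0` in polar coordinates since
`∫₀ dr / (r log (1/r) ^ n) < ∞` for `n ≥ 2`. Letting `δ → 0` gives modulus zero.
-/

open Topology

noncomputable section

lemma modulusW_le {n : ℕ} {p : ℝ} {w : EuclideanSpace ℝ (Fin n) → ℝ≥0∞}
    {Γ : Set (ℝ × (ℝ → EuclideanSpace ℝ (Fin n)))} {ρ : EuclideanSpace ℝ (Fin n) → ℝ≥0∞}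
    (hρ : Measurable ρ) (hadm : Admissible n Γ ρ) :
    ModulusW n p w Γ ≤ ∫⁻ x, ρ x ^ p * w x :=
  iInf₂_le ρ ⟨hρ, hadm⟩

lemma modulusW_eq_zero_of_forall_lintegral_eq_top {n : ℕ} {p : ℝ} (hp : 0 < p)
    {w : EuclideanSpace ℝ (Fin n) → ℝ≥0∞} {Γ : Set (ℝ × (ℝ → EuclideanSpace ℝ (Fin n)))}
    {ρ : EuclideanSpace ℝ (Fin n) → ℝ≥0∞} (hρ : Measurable ρ)
    (hΓ : ∀ c ∈ Γ, ∫⁻ t in Ico 0 c.1, ρ (c.2 t) = ∞) (hρw : ∫⁻ x, ρ x ^ p * w x ≠ ∞) :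
    ModulusW n p w Γ = 0 := by
  have hle : ∀ δ > (0 : ℝ),
      ModulusW n p w Γ ≤ ENNReal.ofReal (δ ^ p) * ∫⁻ x, ρ x ^ p * w x := by
    intro δ hδ
    have hadm : Admissible n Γ fun x => ENNReal.ofReal δ * ρ x := by
      intro c hc
      calc 1 ≤ ENNReal.ofReal δ * ∫⁻ t in Ico 0 c.1, ρ (c.2 t) := by
            rw [hΓ c hc, ENNReal.mul_top (by simpa using hδ)]; exact le_top
        _ ≤ _ := lintegral_const_mul_le _ _
    calc ModulusW n p w Γ ≤ ∫⁻ x, (ENNReal.ofReal δ * ρ x) ^ p * w x :=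
          modulusW_le (hρ.const_mul _) hadm
      _ = _ := by
        simp_rw [ENNReal.mul_rpow_of_nonneg _ _ hp.le, ENNReal.ofReal_rpow_of_nonneg hδ.le hp.le,
          mul_assoc]
        exact lintegral_const_mul' _ _ ofReal_ne_top
  have hlim : Tendsto (fun δ : ℝ => ENNReal.ofReal (δ ^ p) * ∫⁻ x, ρ x ^ p * w x)
      (𝓝[>] 0) (𝓝 0) := by
    have hδp : Tendsto (fun δ : ℝ => δ ^ p) (𝓝 0) (𝓝 0) := by
      simpa [Real.zero_rpow hp.ne'] using (continuous_id.rpow_const fun _ => Or.inr hp.le).tendsto 0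
    simpa using ENNReal.Tendsto.mul_const
      (ENNReal.tendsto_ofReal (tendsto_nhdsWithin_of_tendsto_nhds hδp)) (Or.inr hρw)
  exact nonpos_iff_eq_zero.1 (ge_of_tendsto hlim (eventually_nhdsWithin_of_forall hle))

def R₀ : ℝ := exp (-exp 1)

def rLogLog (r : ℝ) : ℝ := r * Real.log r⁻¹ * Real.log (Real.log r⁻¹)

lemma R₀_pos : 0 < R₀ := exp_pos _

lemma R₀_lt_one : R₀ < 1 := exp_lt_one_iff.2 (neg_neg_iff_pos.2 (exp_pos 1))

lemma exp_one_le_log_inv {r : ℝ} (hr : 0 < r) (hrR : r ≤ R₀) : exp 1 ≤ Real.log r⁻¹ := by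
  have := Real.log_le_log hr hrR
  rw [R₀, Real.log_exp] at this
  rw [Real.log_inv]
  linarith

lemma one_le_log_log_inv {r : ℝ} (hr : 0 < r) (hrR : r ≤ R₀) : 1 ≤ Real.log (Real.log r⁻¹) := by
  rw [← Real.log_exp 1]
  exact Real.log_le_log (exp_pos 1) (exp_one_le_log_inv hr hrR)

lemma rLogLog_pos {r : ℝ} (hr : 0 < r) (hrR : r ≤ R₀) : 0 < rLogLog r := by
  have := exp_one_le_log_inv hr hrR
  have := one_le_log_log_inv hr hrR
  exact mul_pos (mul_pos hr (by linarith [exp_pos 1])) (by linarith)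

lemma hasDerivAt_log_inv {r : ℝ} (hr : 0 < r) :
    HasDerivAt (fun r => Real.log r⁻¹) (-r⁻¹) r := by
  convert (hasDerivAt_inv hr.ne').log (inv_ne_zero hr.ne') using 1
  field_simp

lemma hasDerivAt_log_log_inv {r : ℝ} (hr : 0 < r) (hr1 : r < 1) :
    HasDerivAt (fun r => Real.log (Real.log r⁻¹)) (-(r * Real.log r⁻¹)⁻¹) r := by
  have hL : Real.log r⁻¹ ≠ 0 := (Real.log_pos ((one_lt_inv₀ hr).2 hr1)).ne'
  convert (hasDerivAt_log_inv hr).log hL using 1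
  field_simp

lemma hasDerivAt_rLogLog {r : ℝ} (hr : 0 < r) (hr1 : r < 1) :
    HasDerivAt rLogLog ((Real.log r⁻¹ - 1) * Real.log (Real.log r⁻¹) - 1) r := by
  have hL : Real.log r⁻¹ ≠ 0 := (Real.log_pos ((one_lt_inv₀ hr).2 hr1)).ne'
  refine (((hasDerivAt_id' r).mul (hasDerivAt_log_inv hr)).mul
    (hasDerivAt_log_log_inv hr hr1)).congr_deriv ?_
  simp only [Pi.mul_apply, mul_neg, mul_inv_cancel₀ hr.ne', mul_inv_cancel₀ (mul_ne_zero hr.ne' hL)]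
  ring

lemma monotoneOn_rLogLog : MonotoneOn rLogLog (Ioc 0 R₀) := by
  refine monotoneOn_of_hasDerivWithinAt_nonneg (convex_Ioc 0 R₀)
    (f' := fun r => (Real.log r⁻¹ - 1) * Real.log (Real.log r⁻¹) - 1)
    (fun r hr =>
      (hasDerivAt_rLogLog hr.1 (hr.2.trans_lt R₀_lt_one)).continuousAt.continuousWithinAt)
    (fun r hr => ?_) (fun r hr => ?_) <;> rw [interior_Ioc] at hr
  · exact (hasDerivAt_rLogLog hr.1 (hr.2.trans R₀_lt_one)).hasDerivWithinAt
  · have hA := exp_one_le_log_inv hr.1 hr.2.le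
    have hB := one_le_log_log_inv hr.1 hr.2.le
    have he : 2 ≤ exp 1 := by linarith [add_one_le_exp (1 : ℝ)]
    nlinarith

lemma hasDerivAt_log_log_log_inv {r : ℝ} (hr : 0 < r) (hrR : r < R₀) :
    HasDerivAt (fun r => Real.log (Real.log (Real.log r⁻¹))) (-(rLogLog r)⁻¹) r := by
  have hB : Real.log (Real.log r⁻¹) ≠ 0 := by linarith [one_le_log_log_inv hr hrR.le]
  convert (hasDerivAt_log_log_inv hr (hrR.trans R₀_lt_one)).log hB using 1
  unfold rLogLog
  field_simp

lemma not_integrableOn_inv_rLogLog {T : ℝ} (hT : 0 < T) :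
    ¬ IntegrableOn (fun r => (rLogLog r)⁻¹) (Ioo 0 T) := by
  have hnear : ∀ᶠ r in 𝓝[>] (0 : ℝ), r ∈ Ioo 0 R₀ := Ioo_mem_nhdsGT R₀_pos
  refine not_integrableOn_of_tendsto_norm_atTop_of_deriv_isBigO_filter (𝓝[>] 0)
    (f := fun r => Real.log (Real.log (Real.log r⁻¹))) (Ioo_mem_nhdsGT hT) ?_ ?_ ?_
  · filter_upwards [hnear] with r hr
    exact (hasDerivAt_log_log_log_inv hr.1 hr.2).differentiableAt
  · exact tendsto_norm_atTop_atTop.comp <| Real.tendsto_log_atTop.comp <|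
      Real.tendsto_log_atTop.comp <| Real.tendsto_log_atTop.comp tendsto_inv_nhdsGT_zero
  · have hderiv : deriv (fun r => Real.log (Real.log (Real.log r⁻¹))) =ᶠ[𝓝[>] 0]
        fun r => -(rLogLog r)⁻¹ := by
      filter_upwards [hnear] with r hr
      exact (hasDerivAt_log_log_log_inv hr.1 hr.2).deriv
    exact (Asymptotics.isBigO_refl _ _).neg_left.congr' hderiv.symm EventuallyEq.rfl

lemma measurable_rLogLog : Measurable rLogLog := by
  unfold rLogLog; fun_prop

lemma lintegral_inv_rLogLog_eq_top {T : ℝ} (hT : 0 < T) (hTR : T ≤ R₀) :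
    ∫⁻ r in Ioo 0 T, ENNReal.ofReal (rLogLog r)⁻¹ = ∞ := by
  by_contra h
  refine not_integrableOn_inv_rLogLog hT ((lintegral_ofReal_ne_top_iff_integrable
    measurable_rLogLog.inv.aestronglyMeasurable ?_).1 h)
  filter_upwards [ae_restrict_mem measurableSet_Ioo] with r hr
  exact (inv_pos.2 (rLogLog_pos hr.1 (hr.2.le.trans hTR))).le

lemma edist_le_of_eVariationOn_le {E : Type*} [PseudoEMetricSpace E] {γ : ℝ → E} {s L : ℝ}
    {x : E} (hsL : s < L) (hvar : ∀ t ∈ Ioo s L, eVariationOn γ (Icc s t) ≤ ENNReal.ofReal (t - s))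
    (hγ : Tendsto γ (𝓝[<] L) (𝓝 x)) :
    edist (γ s) x ≤ ENNReal.ofReal (L - s) := by
  refine le_of_tendsto (tendsto_const_nhds.edist hγ) ?_
  filter_upwards [Ioo_mem_nhdsLT hsL] with t ht
  calc edist (γ s) (γ t) ≤ eVariationOn γ (Icc s t) :=
        eVariationOn.edist_le γ (left_mem_Icc.2 ht.1.le) (right_mem_Icc.2 ht.1.le)
    _ ≤ ENNReal.ofReal (t - s) := hvar t ht
    _ ≤ ENNReal.ofReal (L - s) := ENNReal.ofReal_le_ofReal (by linarith [ht.2])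

lemma norm_le_of_mem_curvesToZero {n : ℕ} {R : ℝ} {c : ℝ × (ℝ → EuclideanSpace ℝ (Fin n))}
    (hc : c ∈ CurvesToZero n R) {t : ℝ} (ht : t ∈ Ico 0 c.1) : ‖c.2 t‖ ≤ c.1 - t := by
  obtain ⟨-, hvar, -, hlim⟩ := hc
  have h := edist_le_of_eVariationOn_le ht.2
    (fun s hs => (hvar t ht s ⟨ht.1.trans hs.1.le, hs.2⟩ hs.1.le).le) hlim
  rwa [edist_le_ofReal (by linarith [ht.2]), dist_zero_right] at h

def rLogLogDensity (n : ℕ) : EuclideanSpace ℝ (Fin n) → ℝ≥0∞ :=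
  (Metric.ball 0 R₀).indicator fun y => ENNReal.ofReal (rLogLog ‖y‖)⁻¹

lemma measurable_rLogLogDensity (n : ℕ) : Measurable (rLogLogDensity n) :=
  (ENNReal.measurable_ofReal.comp (measurable_rLogLog.comp measurable_norm).inv).indicator
    measurableSet_ball

lemma lintegral_rLogLogDensity_comp_eq_top {n : ℕ} {c : ℝ × (ℝ → EuclideanSpace ℝ (Fin n))}
    (hc : c ∈ CurvesToZero n R₀) : ∫⁻ t in Ico 0 c.1, rLogLogDensity n (c.2 t) = ∞ := by
  obtain ⟨L, γ⟩ := c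
  set T := min L R₀
  have hT : 0 < T := lt_min hc.1 R₀_pos
  have hsub : Ioo (L - T) L ⊆ Ico 0 L := fun t ht => ⟨by linarith [ht.1, min_le_left L R₀], ht.2⟩
  have hbound : ∀ t ∈ Ioo (L - T) L,
      ENNReal.ofReal (rLogLog (L - t))⁻¹ ≤ rLogLogDensity n (γ t) := by
    intro t ht
    obtain ⟨hball, hne⟩ := hc.2.2.1 t (hsub ht)
    have hpos : 0 < ‖γ t‖ := norm_pos_iff.2 hne
    have hlt : ‖γ t‖ < R₀ := mem_ball_zero_iff.1 hball
    have hLt : L - t ∈ Ioc 0 R₀ := ⟨by linarith [ht.2], by linarith [ht.1, min_le_right L R₀]⟩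
    rw [rLogLogDensity, indicator_of_mem hball]
    exact ENNReal.ofReal_le_ofReal <| inv_anti₀ (rLogLog_pos hpos hlt.le) <|
      monotoneOn_rLogLog ⟨hpos, hlt.le⟩ hLt (norm_le_of_mem_curvesToZero hc (hsub ht))
  have hreflect : ∫⁻ t in Ioo (L - T) L, ENNReal.ofReal (rLogLog (L - t))⁻¹
      = ∫⁻ r in Ioo 0 T, ENNReal.ofReal (rLogLog r)⁻¹ := by
    have hpre : (fun t => L - t) ⁻¹' Ioo 0 T = Ioo (L - T) L := by
      ext t
      simp only [mem_preimage, mem_Ioo]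
      constructor <;> rintro ⟨h₁, h₂⟩ <;> constructor <;> linarith
    rw [← hpre]
    exact (Measure.measurePreserving_sub_left volume L).setLIntegral_comp_preimage_emb
      (MeasurableEquiv.subLeft L).measurableEmbedding (fun r => ENNReal.ofReal (rLogLog r)⁻¹) _
  refine eq_top_iff.2 ?_
  calc ∞ = ∫⁻ t in Ioo (L - T) L, ENNReal.ofReal (rLogLog (L - t))⁻¹ := by
        rw [hreflect, lintegral_inv_rLogLog_eq_top hT (min_le_right L R₀)]
    _ ≤ ∫⁻ t in Ioo (L - T) L, rLogLogDensity n (γ t) := setLIntegral_mono' measurableSet_Ioo hbound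
    _ ≤ _ := lintegral_mono_set hsub

lemma hasDerivAt_inv_log_inv_pow {r : ℝ} (m : ℕ) (hr : 0 < r) (hr1 : r < 1) :
    HasDerivAt (fun r => (Real.log r⁻¹ ^ (m + 1))⁻¹ / (m + 1))
      (r * Real.log r⁻¹ ^ (m + 2))⁻¹ r := by
  have hL : Real.log r⁻¹ ≠ 0 := (Real.log_pos ((one_lt_inv₀ hr).2 hr1)).ne'
  refine ((((hasDerivAt_log_inv hr).fun_pow (m + 1)).inv (pow_ne_zero _ hL)).div_const _
    ).congr_deriv ?_
  rw [Nat.add_sub_cancel]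
  generalize Real.log r⁻¹ = L at hL ⊢
  field_simp
  push_cast
  ring

lemma integrableOn_inv_mul_log_inv_pow {a : ℝ} (ha : a < 1) {k : ℕ} (hk : 2 ≤ k) :
    IntegrableOn (fun r => (r * Real.log r⁻¹ ^ k)⁻¹) (Ioc 0 a) := by
  obtain ⟨m, rfl⟩ := Nat.exists_eq_add_of_le' hk
  rcases le_or_gt a 0 with ha0 | ha0
  · simp [Ioc_eq_empty_of_le ha0]
  set G : ℝ → ℝ := fun r => (Real.log r⁻¹ ^ (m + 1))⁻¹ / (m + 1)
  refine intervalIntegral.integrableOn_deriv_of_nonneg (g := G) ?_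
    (fun r hr => hasDerivAt_inv_log_inv_pow m hr.1 (hr.2.trans ha)) (fun r hr => ?_)
  · intro r hr
    rcases hr.1.eq_or_lt with rfl | hr0
    · have hlim : Tendsto G (𝓝[>] 0) (𝓝 0) := by
        simpa [G] using (tendsto_inv_atTop_zero.comp ((tendsto_pow_atTop m.succ_ne_zero).comp
          (Real.tendsto_log_atTop.comp tendsto_inv_nhdsGT_zero))).div_const ((m : ℝ) + 1)
      have hcont : ContinuousWithinAt G (Ioi 0) 0 := by
        simpa [ContinuousWithinAt, G] using hlim
      exact (continuousWithinAt_Ioi_iff_Ici.1 hcont).mono Icc_subset_Ici_self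
    · exact (hasDerivAt_inv_log_inv_pow m hr0 (hr.2.trans_lt ha)).continuousAt.continuousWithinAt
  · have : 0 < Real.log r⁻¹ := Real.log_pos ((one_lt_inv₀ hr.1).2 (hr.2.trans ha))
    have := hr.1
    positivity

lemma integrableOn_ball_inv_mul_log_inv_pow_finrank {E : Type*} [NormedAddCommGroup E]
    [NormedSpace ℝ E] [FiniteDimensional ℝ E] [MeasurableSpace E] [BorelSpace E]
    (μ : Measure E) [μ.IsAddHaarMeasure] (hE : 2 ≤ Module.finrank ℝ E) {a : ℝ} (ha : a < 1) :
    IntegrableOn (fun x : E => (‖x‖ * Real.log ‖x‖⁻¹)⁻¹ ^ Module.finrank ℝ E)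
      (Metric.ball 0 a) μ := by
  have : Nontrivial E := Module.nontrivial_of_finrank_pos (R := ℝ) (by omega)
  rw [integrableOn_fun_norm_addHaar μ (f := fun r => (r * Real.log r⁻¹)⁻¹ ^ Module.finrank ℝ E)]
  refine ((integrableOn_inv_mul_log_inv_pow ha hE).mono_set Ioo_subset_Ioc_self).congr_fun
    (fun r hr => ?_) measurableSet_Ioo
  obtain ⟨k, hk⟩ := Nat.exists_eq_add_of_le' (one_le_two.trans hE)
  have hr : r ≠ 0 := hr.1.ne'
  beta_reduce
  rw [hk, Nat.add_sub_cancel, smul_eq_mul, mul_inv, mul_inv, mul_pow, inv_pow r, pow_succ r k,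
    mul_inv, ← mul_assoc, ← mul_assoc, mul_inv_cancel₀ (pow_ne_zero k hr), one_mul, inv_pow]

lemma rLogLogDensity_rpow_mul_weight {n : ℕ} (hn : n ≠ 0) (x : EuclideanSpace ℝ (Fin n)) :
    rLogLogDensity n x ^ (n : ℝ) * ENNReal.ofReal (Real.log (Real.log (1 / ‖x‖)) ^ n) =
      (Metric.ball 0 R₀).indicator
        (fun x => ENNReal.ofReal ((‖x‖ * Real.log ‖x‖⁻¹)⁻¹ ^ n)) x := by
  by_cases hx : x ∈ Metric.ball 0 R₀
  · rw [rLogLogDensity, indicator_of_mem hx, indicator_of_mem hx]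
    rcases eq_or_ne x 0 with rfl | hx0
    · simp [rLogLog, hn]
    have hpos := norm_pos_iff.2 hx0
    have hlt := mem_ball_zero_iff.1 hx
    have hρ := inv_nonneg.2 (rLogLog_pos hpos hlt.le).le
    rw [ENNReal.ofReal_rpow_of_nonneg hρ n.cast_nonneg, Real.rpow_natCast,
      ← ENNReal.ofReal_mul (pow_nonneg hρ n), ← mul_pow, one_div, rLogLog,
      mul_inv, inv_mul_cancel_right₀ (one_pos.trans_le (one_le_log_log_inv hpos hlt.le)).ne']
  · rw [rLogLogDensity, indicator_of_notMem hx, indicator_of_notMem hx,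
      ENNReal.zero_rpow_of_pos (by positivity), zero_mul]

lemma lintegral_rLogLogDensity_rpow_mul_weight_ne_top {n : ℕ} (hn : 2 ≤ n) :
    ∫⁻ x, rLogLogDensity n x ^ (n : ℝ) * ENNReal.ofReal (Real.log (Real.log (1 / ‖x‖)) ^ n)
      ≠ ∞ := by
  have hint := integrableOn_ball_inv_mul_log_inv_pow_finrank
    (volume : Measure (EuclideanSpace ℝ (Fin n))) (by rwa [finrank_euclideanSpace_fin]) R₀_lt_one
  rw [finrank_euclideanSpace_fin] at hint
  simp_rw [rLogLogDensity_rpow_mul_weight (by omega : n ≠ 0)]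
  rw [lintegral_indicator measurableSet_ball]
  exact hint.lintegral_lt_top.ne

end

/-- The family of all rectifiable curves in `B^n(0, e^{-e})` ending at the
origin has weighted `n`-modulus zero with respect to the weight
`w(y) = (log log (1/|y|))^n`. -/
theorem stmt9 (n : ℕ) (hn : 2 ≤ n) :
    ModulusW n n
      (fun y => ENNReal.ofReal ((Real.log (Real.log (1/‖y‖))) ^ n))
      (CurvesToZero n (Real.exp (-(Real.exp 1)))) = 0 :=
  modulusW_eq_zero_of_forall_lintegral_eq_top (by exact_mod_cast (by omega : 0 < n))
    (measurable_rLogLogDensity n) (fun _ hc => lintegral_rLogLogDensity_comp_eq_top hc)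
    (lintegral_rLogLogDensity_rpow_mul_weight_ne_top hn)
end
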